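/- Let α : I → ℝ³ be a C² regular lightlike curve with null frame {t, z₁, z₂} (frame equations t' = κ₃t + κ₁z₁, z₁' = −κ₂t + κ₁z₂, z₂' = −κ₂z₁ − κ₃z₂). If α lies on a pseudo-sphere or light-cone {x : (x−P, x−P) = ρ} with ρ ≥ 0 (and α(s) ≠ P when ρ = 0), then κ₁(s) = 0 for all s. -/
import Mathlib


noncomputable section

open Matrix

/-- The Minkowski bilinear form on ℝ³. -/
def mink (x y : Fin 3 → ℝ) : ℝ := x 0 * y 0 + x 1 * y 1 - x 2 * y 2

lemma mink_comm (x y : Fin 3 → ℝ) : mink x y = mink y x := by unfold mink; ring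

lemma mink_add_left (x y z : Fin 3 → ℝ) : mink (x + y) z = mink x z + mink y z := by
  simp only [mink, Pi.add_apply]; ring

lemma mink_sub_left (x y z : Fin 3 → ℝ) : mink (x - y) z = mink x z - mink y z := by
  simp only [mink, Pi.sub_apply]; ring

lemma mink_smul_left (a : ℝ) (x y : Fin 3 → ℝ) : mink (a • x) y = a * mink x y := by
  simp only [mink, Pi.smul_apply, smul_eq_mul]; ring

lemma mink_add_right (x y z : Fin 3 → ℝ) : mink x (y + z) = mink x y + mink x z := by
  simp only [mink, Pi.add_apply]; ring

lemma mink_smul_right (a : ℝ) (x y : Fin 3 → ℝ) : mink x (a • y) = a * mink x y := by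
  simp only [mink, Pi.smul_apply, smul_eq_mul]; ring

/-- Nondegeneracy of `mink` w.r.t. a null frame: a vector orthogonal to all three
frame vectors vanishes. -/
lemma null_frame_nondeg (t z₁ z₂ w : Fin 3 → ℝ)
    (htt : mink t t = 0) (h11 : mink z₁ z₁ = 1) (ht1 : mink t z₁ = 0)
    (h22 : mink z₂ z₂ = 0) (h12 : mink z₁ z₂ = 0) (ht2 : mink t z₂ = -1)
    (hwt : mink w t = 0) (hw1 : mink w z₁ = 0) (hw2 : mink w z₂ = 0) :
    w = 0 := by
  classical
  set M : Matrix (Fin 3) (Fin 3) ℝ := Matrix.of ![t, z₁, z₂] with hM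
  set J : Matrix (Fin 3) (Fin 3) ℝ := !![1,0,0;0,1,0;0,0,-1] with hJ
  set G : Matrix (Fin 3) (Fin 3) ℝ := !![0,0,-1;0,1,0;-1,0,0] with hG
  have hMJM : M * J * M.transpose = G := by
    simp only [mink] at htt h11 ht1 h22 h12 ht2
    ext i j
    fin_cases i <;> fin_cases j <;>
      simp [hM, hJ, hG, Matrix.mul_apply, Fin.sum_univ_three, Matrix.vecHead, Matrix.vecTail] <;>
      linarith
  have hdetG : G.det = -1 := by
    simp [hG, Matrix.det_fin_three]
  have hdetJ : J.det = -1 := by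
    simp [hJ, Matrix.det_fin_three]
  have hdet : M.det ≠ 0 := by
    intro h
    have := congrArg Matrix.det hMJM
    rw [Matrix.det_mul, Matrix.det_mul, Matrix.det_transpose, hdetJ, hdetG, h] at this
    norm_num at this
  have hv : M *ᵥ (J *ᵥ w) = 0 := by
    simp only [mink] at hwt hw1 hw2
    ext i
    fin_cases i <;>
      simp [hM, hJ, Matrix.mulVec, dotProduct, Fin.sum_univ_three,
        Matrix.vecHead, Matrix.vecTail] <;>
      linarith
  have hJw : J *ᵥ w = 0 := Matrix.eq_zero_of_mulVec_eq_zero hdet hv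
  have h0 := congrFun hJw 0
  have h1 := congrFun hJw 1
  have h2 := congrFun hJw 2
  simp [hJ, Matrix.mulVec, dotProduct, Fin.sum_univ_three,
    Matrix.vecHead, Matrix.vecTail] at h0 h1 h2
  funext i
  fin_cases i <;> simp [h0, h1] <;> linarith

/-- Derivative of the Minkowski pairing of two differentiable curves. -/
lemma hasDerivAt_mink {x y : ℝ → Fin 3 → ℝ} {x' y' : Fin 3 → ℝ} {s : ℝ}
    (hx : HasDerivAt x x' s) (hy : HasDerivAt y y' s) :
    HasDerivAt (fun s => mink (x s) (y s)) (mink x' (y s) + mink (x s) y') s := by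
  have hx0 := hasDerivAt_pi.1 hx 0
  have hx1 := hasDerivAt_pi.1 hx 1
  have hx2 := hasDerivAt_pi.1 hx 2
  have hy0 := hasDerivAt_pi.1 hy 0
  have hy1 := hasDerivAt_pi.1 hy 1
  have hy2 := hasDerivAt_pi.1 hy 2
  have key : HasDerivAt (fun s => x s 0 * y s 0 + x s 1 * y s 1 - x s 2 * y s 2)
      ((x' 0 * y s 0 + x s 0 * y' 0 + (x' 1 * y s 1 + x s 1 * y' 1)) -
        (x' 2 * y s 2 + x s 2 * y' 2)) s :=
    ((hx0.mul hy0).add (hx1.mul hy1)).sub (hx2.mul hy2)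
  have hval : mink x' (y s) + mink (x s) y' =
      (x' 0 * y s 0 + x s 0 * y' 0 + (x' 1 * y s 1 + x s 1 * y' 1)) -
        (x' 2 * y s 2 + x s 2 * y' 2) := by
    unfold mink; ring
  rw [hval]
  exact key

/-- If a lightlike curve with a null frame lies on a pseudo-sphere or a light-cone
`{x : (x−P,x−P) = ρ}`, `ρ ≥ 0`, then `κ₁ = 0`. -/
theorem lightlike_curve_on_sphere_kappa_one_zero
    (α t z₁ z₂ : ℝ → Fin 3 → ℝ) (κ₁ κ₂ κ₃ : ℝ → ℝ)
    (hαt : ∀ s, HasDerivAt α (t s) s)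
    (hlight : ∀ s, mink (t s) (t s) = 0)
    (hreg : ∀ s, t s ≠ 0)
    (hz₁z₁ : ∀ s, mink (z₁ s) (z₁ s) = 1)
    (htz₁ : ∀ s, mink (t s) (z₁ s) = 0)
    (hz₂z₂ : ∀ s, mink (z₂ s) (z₂ s) = 0)
    (hz₁z₂ : ∀ s, mink (z₁ s) (z₂ s) = 0)
    (htz₂ : ∀ s, mink (t s) (z₂ s) = -1)
    (ht' : ∀ s, HasDerivAt t (κ₃ s • t s + κ₁ s • z₁ s) s)
    (hz₁' : ∀ s, HasDerivAt z₁ ((-(κ₂ s)) • t s + κ₁ s • z₂ s) s)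
    (hz₂' : ∀ s, HasDerivAt z₂ ((-(κ₂ s)) • z₁ s + (-(κ₃ s)) • z₂ s) s)
    (P : Fin 3 → ℝ) (ρ : ℝ) (hρ : 0 ≤ ρ)
    (hsph : ∀ s, mink (α s - P) (α s - P) = ρ)
    (hne : ρ = 0 → ∀ s, α s ≠ P) :
    ∀ s, κ₁ s = 0 := by
  set u : ℝ → Fin 3 → ℝ := fun s => α s - P with hu
  have hu' : ∀ s, HasDerivAt u (t s) s := fun s => (hαt s).sub_const P
  -- Step 1: (t, u) = 0
  have h1 : ∀ s, mink (t s) (u s) = 0 := by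
    intro s
    have hg : HasDerivAt (fun s => mink (u s) (u s))
        (mink (t s) (u s) + mink (u s) (t s)) s := hasDerivAt_mink (hu' s) (hu' s)
    have heq : (fun s => mink (u s) (u s)) = fun _ => ρ := funext fun s => hsph s
    rw [heq] at hg
    have h0 := hg.unique (hasDerivAt_const s ρ)
    rw [mink_comm (u s) (t s)] at h0
    linarith
  -- Step 2: κ₁ * (z₁, u) = 0
  have h2 : ∀ s, κ₁ s * mink (z₁ s) (u s) = 0 := by
    intro s
    have hg : HasDerivAt (fun s => mink (t s) (u s))
        (mink (κ₃ s • t s + κ₁ s • z₁ s) (u s) + mink (t s) (t s)) s :=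
      hasDerivAt_mink (ht' s) (hu' s)
    have heq : (fun s => mink (t s) (u s)) = fun _ => (0:ℝ) := funext fun s => h1 s
    rw [heq] at hg
    have h0 := hg.unique (hasDerivAt_const s 0)
    rw [mink_add_left, mink_smul_left, mink_smul_left, hlight s, h1 s] at h0
    linarith
  -- decomposition: u s = a • t s + b • z₁ s with b = (z₁, u)
  have hdecomp : ∀ s, u s = (-(mink (u s) (z₂ s))) • t s + (mink (u s) (z₁ s)) • z₁ s := by
    intro s
    set a : ℝ := -(mink (u s) (z₂ s))
    set b : ℝ := mink (u s) (z₁ s)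
    have hw : u s - (a • t s + b • z₁ s) = 0 := by
      apply null_frame_nondeg (t s) (z₁ s) (z₂ s) _
        (hlight s) (hz₁z₁ s) (htz₁ s) (hz₂z₂ s) (hz₁z₂ s) (htz₂ s)
      · rw [mink_sub_left, mink_add_left, mink_smul_left, mink_smul_left,
          hlight s, mink_comm (z₁ s) (t s), htz₁ s, mink_comm (u s) (t s), h1 s]
        ring
      · rw [mink_sub_left, mink_add_left, mink_smul_left, mink_smul_left,
          htz₁ s, hz₁z₁ s]
        simp [b]
      · rw [mink_sub_left, mink_add_left, mink_smul_left, mink_smul_left,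
          htz₂ s, hz₁z₂ s]
        simp [a]
    have := sub_eq_zero.mp hw
    exact this
  -- (u, u) = b²
  have hb2 : ∀ s, mink (u s) (z₁ s) ^ 2 = ρ := by
    intro s
    have hz₁t : mink (z₁ s) (t s) = 0 := by rw [mink_comm]; exact htz₁ s
    have h : mink (u s) (u s) = ρ := hsph s
    rw [hdecomp s] at h
    simp only [mink_add_left, mink_add_right, mink_smul_left, mink_smul_right,
      hlight s, hz₁z₁ s, htz₁ s, hz₁t, mul_zero, zero_add, add_zero, mul_one] at h
    nlinarith [h]
  intro s
  rcases lt_or_eq_of_le hρ with hpos | hzero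
  · -- ρ > 0 : b ≠ 0
    have hbne : mink (z₁ s) (u s) ≠ 0 := by
      intro hb
      rw [mink_comm (z₁ s) (u s)] at hb
      have := hb2 s
      rw [hb] at this
      simp at this
      linarith
    rcases mul_eq_zero.mp (h2 s) with h | h
    · exact h
    · exact absurd h hbne
  · -- ρ = 0 : b ≡ 0, differentiate and use (u, z₂) ≠ 0
    have hρ0 : ρ = 0 := hzero.symm
    have hb0 : ∀ s, mink (z₁ s) (u s) = 0 := by
      intro s
      have := hb2 s
      rw [hρ0, pow_eq_zero_iff (two_ne_zero)] at this
      rw [mink_comm]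
      exact this
    have hg : HasDerivAt (fun s => mink (z₁ s) (u s))
        (mink ((-(κ₂ s)) • t s + κ₁ s • z₂ s) (u s) + mink (z₁ s) (t s)) s :=
      hasDerivAt_mink (hz₁' s) (hu' s)
    have heq : (fun s => mink (z₁ s) (u s)) = fun _ => (0:ℝ) := funext fun s => hb0 s
    rw [heq] at hg
    have h0 := hg.unique (hasDerivAt_const s 0)
    rw [mink_add_left, mink_smul_left, mink_smul_left, h1 s,
      mink_comm (z₁ s) (t s), htz₁ s] at h0
    -- h0 : -(κ₂ s) * 0 + κ₁ s * mink (z₂ s) (u s) + 0 = 0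
    have hz₂u : mink (z₂ s) (u s) ≠ 0 := by
      intro hc
      have hun : u s = 0 := by
        apply null_frame_nondeg (t s) (z₁ s) (z₂ s) (u s)
          (hlight s) (hz₁z₁ s) (htz₁ s) (hz₂z₂ s) (hz₁z₂ s) (htz₂ s)
        · rw [mink_comm]; exact h1 s
        · rw [mink_comm]; exact hb0 s
        · rw [mink_comm]; exact hc
      have halP : α s = P := sub_eq_zero.mp hun
      exact (hne hρ0 s) halP
    have : κ₁ s * mink (z₂ s) (u s) = 0 := by linarith
    rcases mul_eq_zero.mp this with h | h
    · exact h
    · exact absurd h hz₂u
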